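/- Let p ∈ ℤ, let q ≥ 1 be an integer, let κ ≥ 2 be even and K = κq. Let V ∈ ℝ^{B^K} satisfy (F_K V)_j = 0 for every j ∈ B^K not divisible by q. Then the discrete free flow at time 2πp/q commutes with multiplication by V: for every U ∈ ℂ^{B^K}, e^{2πi(p/q)Δ^K}((V_kU_k)_k) = (V_k·(e^{2πi(p/q)Δ^K}U)_k)_k. -/

import Mathlib

/-- The index set `B^K = {−K/2, …, K/2−1}` (for `K` even). -/
noncomputable def BK (K : ℕ) : Finset ℤ := Finset.Icc (-((K : ℤ) / 2)) ((K : ℤ) / 2 - 1)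

/-- The discrete Fourier transform `(F_K U)_j = (1/K) Σ_{k∈B^K} e^{−2πijk/K} U_k`. -/
noncomputable def dft (K : ℕ) (U : ℤ → ℂ) (j : ℤ) : ℂ :=
  (1 / (K : ℂ)) * ∑ k ∈ BK K,
    Complex.exp (-(2 * (Real.pi : ℂ) * Complex.I * (j : ℂ) * (k : ℂ)) / (K : ℂ)) * U k

/-- The inverse discrete Fourier transform `(F_K⁻¹ W)_k = Σ_{j∈B^K} e^{2πijk/K} W_j`. -/
noncomputable def idft (K : ℕ) (W : ℤ → ℂ) (k : ℤ) : ℂ :=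
  ∑ j ∈ BK K,
    Complex.exp ((2 * (Real.pi : ℂ) * Complex.I * (j : ℂ) * (k : ℂ)) / (K : ℂ)) * W j

/-- The discrete `ℓ²` norm: `‖U‖_{ℓ²}² = (2π/K) Σ_{k∈B^K} |U_k|²`. -/
noncomputable def l2normK (K : ℕ) (U : ℤ → ℂ) : ℝ :=
  Real.sqrt ((2 * Real.pi / K) * ∑ k ∈ BK K, ‖U k‖ ^ 2)

/-- The discrete `h¹` norm: `‖U‖_{h¹}² = (2π/K) Σ_{k∈B^K} |(U_{k+1}−U_k)/δx|²`
with `δx = 2π/K`. -/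
noncomputable def h1normK (K : ℕ) (U : ℤ → ℂ) : ℝ :=
  Real.sqrt ((2 * Real.pi / K) *
    ∑ k ∈ BK K, ‖(U (k + 1) - U k) / ((2 * Real.pi / K : ℝ) : ℂ)‖ ^ 2)

/-- The discrete kinetic energy `T^K(W) = (1/K) Σ_{j∈B^K} j²|W_j|²`. -/
noncomputable def tK (K : ℕ) (W : ℤ → ℂ) : ℝ :=
  (1 / (K : ℝ)) * ∑ j ∈ BK K, (j : ℝ) ^ 2 * ‖W j‖ ^ 2

/-- The discrete free Schrödinger flow `e^{itΔ^K}U = F_K⁻¹(j ↦ e^{−itj²}(F_K U)_j)`. -/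
noncomputable def freeFlowK (K : ℕ) (t : ℝ) (U : ℤ → ℂ) : ℤ → ℂ :=
  idft K (fun j => Complex.exp (-(Complex.I * (t : ℂ)) * (j : ℂ) ^ 2) * dft K U j)

/-! At time `t = 2πp/q` the phase `e^{-itj²}` is invariant under `j ↦ j + n` whenever `q ∣ n`.
Since `B^K` is a full period, shifting the summation variable in the flow kernel
`G(d) = Σ_j e^{-itj²} e^{2πijd/K}` therefore gives `e^{2πind/K} G(d) = G(d)` for `q ∣ n`.
Expanding `V` in its Fourier series, whose frequencies are multiples of `q`, this turns
`V_m G(k - m)` into `V_k G(k - m)`, and summing against `U_m` gives the commutation. -/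

open Finset Complex
open scoped Real

noncomputable def expK (K : ℕ) (a : ℤ) : ℂ :=
  exp (2 * π * I * a / K)

lemma expK_add (K : ℕ) (a b : ℤ) : expK K (a + b) = expK K a * expK K b := by
  rw [expK, expK, expK, ← exp_add]
  push_cast
  ring_nf

lemma expK_natCast_mul (K : ℕ) (b : ℤ) : expK K (K * b) = 1 := by
  rcases eq_or_ne K 0 with rfl | hK
  · simp [expK]
  · rw [expK, ← exp_int_mul_two_pi_mul_I b]
    push_cast
    field_simp

lemma expK_eq_one_iff {K : ℕ} (hK : K ≠ 0) (a : ℤ) : expK K a = 1 ↔ (K : ℤ) ∣ a := by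
  refine ⟨fun h => ?_, fun ⟨b, hb⟩ => hb ▸ expK_natCast_mul K b⟩
  obtain ⟨n, hn⟩ := exp_eq_one_iff.mp h
  refine ⟨n, ?_⟩
  field_simp at hn
  exact_mod_cast hn

lemma dft_eq_sum_expK (K : ℕ) (W : ℤ → ℂ) (n : ℤ) :
    dft K W n = (1 / K) * ∑ m ∈ BK K, expK K (-(n * m)) * W m := by
  simp only [dft, expK]
  congr 1
  refine sum_congr rfl fun m _ => ?_
  push_cast
  ring_nf

lemma idft_eq_sum_expK (K : ℕ) (W : ℤ → ℂ) (k : ℤ) :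
    idft K W k = ∑ j ∈ BK K, expK K (j * k) * W j := by
  simp only [idft, expK]
  refine sum_congr rfl fun j _ => ?_
  push_cast
  ring_nf

lemma pos_of_mem_BK {K : ℕ} {k : ℤ} (hk : k ∈ BK K) : 0 < K := by
  rw [BK, mem_Icc] at hk
  omega

lemma card_BK {K : ℕ} (hK : Even K) : #(BK K) = K := by
  obtain ⟨r, rfl⟩ := hK
  rw [BK, Int.card_Icc]
  omega

section PeriodicSum

variable {M : Type*} [AddCommMonoid M] {K : ℕ} {f : ℤ → M}

lemma sum_BK_add_one (hK : Even K) (hf : Function.Periodic f K) :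
    ∑ j ∈ BK K, f (j + 1) = ∑ j ∈ BK K, f j := by
  obtain ⟨r, hr⟩ := hK
  have hBK : BK K = Icc (-(r : ℤ)) (r - 1) := by rw [BK]; congr 1 <;> omega
  rcases Nat.eq_zero_or_pos r with rfl | hr0
  · simp [hBK]
  have hshift : ∑ j ∈ Icc (-(r : ℤ)) (r - 1), f (j + 1) =
      ∑ j ∈ Icc (-(r : ℤ) + 1) (r - 1 + 1), f j := by
    rw [← map_add_right_Icc, sum_map]
    rfl
  have hlow : Icc (-(r : ℤ)) (r - 1) = insert (-(r : ℤ)) (Icc (-(r : ℤ) + 1) (r - 1)) := by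
    ext x; simp only [mem_Icc, mem_insert]; omega
  have hhigh : Icc (-(r : ℤ) + 1) (r - 1 + 1) = insert (r : ℤ) (Icc (-(r : ℤ) + 1) (r - 1)) := by
    ext x; simp only [mem_Icc, mem_insert]; omega
  have hwrap : f r = f (-r) := by
    simpa [show -(r : ℤ) + K = r by omega] using hf (-r)
  rw [hBK, hshift, hlow, hhigh, sum_insert (by simp), sum_insert (by simp), hwrap]

lemma sum_BK_add (hK : Even K) (hf : Function.Periodic f K) (a : ℤ) :
    ∑ j ∈ BK K, f (j + a) = ∑ j ∈ BK K, f j := by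
  have step : ∀ n : ℤ, ∑ j ∈ BK K, f (j + (n + 1)) = ∑ j ∈ BK K, f (j + n) := fun n => by
    simpa only [add_right_comm _ (1 : ℤ), add_assoc] using
      sum_BK_add_one hK (f := fun j => f (j + n)) fun j => by
        simpa only [add_right_comm] using hf (j + n)
  induction a using Int.induction_on with
  | zero => simp
  | succ n ih => rw [step, ih]
  | pred n ih => rw [← ih, ← step, sub_add_cancel]

end PeriodicSum

lemma sum_BK_expK_mul_eq_zero {K : ℕ} (hK : Even K) {d : ℤ} (hd : ¬ (K : ℤ) ∣ d) :
    ∑ j ∈ BK K, expK K (j * d) = 0 := by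
  rcases eq_or_ne K 0 with rfl | hK0
  · simp [BK]
  have hshift := sum_BK_add hK (f := fun j => expK K (j * d))
    (fun j => by simp only [add_mul, expK_add, expK_natCast_mul, mul_one]) 1
  simp only [add_mul, one_mul, expK_add, ← sum_mul] at hshift
  have hne : expK K d ≠ 1 := (expK_eq_one_iff hK0 d).not.mpr hd
  by_contra hS
  exact hne ((mul_eq_left₀ hS).mp hshift)

lemma sum_BK_expK_mul_sub {K : ℕ} (hK : Even K) {k m : ℤ} (hk : k ∈ BK K) (hm : m ∈ BK K) :
    ∑ j ∈ BK K, expK K (j * (k - m)) = if k = m then (K : ℂ) else 0 := by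
  split_ifs with hkm
  · simp [hkm, expK, card_BK hK]
  · refine sum_BK_expK_mul_eq_zero hK fun hdvd => hkm ?_
    rw [BK, mem_Icc] at hk hm
    have := Int.eq_zero_of_abs_lt_dvd hdvd (by rw [abs_lt]; omega)
    omega

lemma idft_dft {K : ℕ} (hK : Even K) (W : ℤ → ℂ) {k : ℤ} (hk : k ∈ BK K) :
    idft K (dft K W) k = W k := by
  have hK0 : (K : ℂ) ≠ 0 := by exact_mod_cast (pos_of_mem_BK hk).ne'
  calc idft K (dft K W) k
      = (1 / K) * ∑ m ∈ BK K, (∑ n ∈ BK K, expK K (n * (k - m))) * W m := by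
        simp only [idft_eq_sum_expK, dft_eq_sum_expK, mul_sum, sum_mul]
        rw [sum_comm]
        refine sum_congr rfl fun m _ => sum_congr rfl fun n _ => ?_
        rw [mul_sub, sub_eq_add_neg, expK_add]
        ring
    _ = W k := by
        rw [sum_congr rfl fun m hm => by rw [sum_BK_expK_mul_sub hK hk hm, ite_mul, zero_mul],
          sum_ite_eq, if_pos hk]
        field_simp

noncomputable def freePhase (t : ℝ) (j : ℤ) : ℂ :=
  exp (-(I * t) * (j : ℂ) ^ 2)

noncomputable def freeKernel (K : ℕ) (t : ℝ) (d : ℤ) : ℂ :=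
  ∑ j ∈ BK K, freePhase t j * expK K (j * d)

lemma freeFlowK_eq_sum_freeKernel (K : ℕ) (t : ℝ) (W : ℤ → ℂ) (k : ℤ) :
    freeFlowK K t W k = (1 / K) * ∑ m ∈ BK K, freeKernel K t (k - m) * W m := by
  simp only [freeFlowK, idft_eq_sum_expK, dft_eq_sum_expK, freeKernel, mul_sum, sum_mul]
  rw [sum_comm]
  refine sum_congr rfl fun m _ => sum_congr rfl fun j _ => ?_
  rw [mul_sub, sub_eq_add_neg, expK_add, freePhase]
  ring

lemma periodic_freePhase_of_dvd (p : ℤ) (q : ℕ) {n : ℤ} (hn : (q : ℤ) ∣ n) :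
    Function.Periodic (freePhase (2 * π * p / q)) n := by
  intro j
  obtain ⟨l, rfl⟩ := hn
  rcases eq_or_ne q 0 with rfl | hq
  · simp
  rw [freePhase, freePhase, ← mul_one (exp (_ * (j : ℂ) ^ 2)),
    ← exp_int_mul_two_pi_mul_I (-(p * (2 * j * l + q * l ^ 2))), ← exp_add]
  push_cast
  field_simp
  ring_nf

lemma expK_mul_freeKernel {K : ℕ} (hK : Even K) {t : ℝ} {n : ℤ}
    (hKt : Function.Periodic (freePhase t) K) (hnt : Function.Periodic (freePhase t) n) (d : ℤ) :
    expK K (n * d) * freeKernel K t d = freeKernel K t d := by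
  have hper : Function.Periodic (fun j => freePhase t j * expK K (j * d)) K := fun j => by
    simp only [hKt j, add_mul, expK_add, expK_natCast_mul, mul_one]
  conv_rhs => rw [freeKernel, ← sum_BK_add hK hper n]
  rw [freeKernel, mul_sum]
  refine sum_congr rfl fun j _ => ?_
  rw [hnt j, add_mul, expK_add]
  ring

lemma mul_eq_mul_of_dft_eq_zero {K : ℕ} (hK : Even K) {q : ℤ} {W : ℤ → ℂ}
    (hW : ∀ n ∈ BK K, ¬ q ∣ n → dft K W n = 0) {k m : ℤ} (hk : k ∈ BK K) (hm : m ∈ BK K)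
    {A : ℂ} (hA : ∀ n, q ∣ n → expK K (n * (k - m)) * A = A) :
    W m * A = W k * A := by
  rw [← idft_dft hK W hk, ← idft_dft hK W hm, idft_eq_sum_expK, idft_eq_sum_expK, sum_mul, sum_mul]
  refine sum_congr rfl fun n hn => ?_
  by_cases hqn : q ∣ n
  · have hsplit : expK K (n * k) = expK K (n * m) * expK K (n * (k - m)) := by
      rw [← expK_add]; ring_nf
    rw [hsplit]
    linear_combination (-(expK K (n * m) * dft K W n)) * hA n hqn
  · simp [hW n hn hqn]

theorem stmt16_general (p : ℤ) (q : ℕ) (κ : ℕ) (hκe : Even κ)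
    (K : ℕ) (hK : K = κ * q)
    (V : ℤ → ℝ)
    (hVq : ∀ j ∈ BK K, ¬ ((q : ℤ) ∣ j) → dft K (fun k => ((V k : ℝ) : ℂ)) j = 0) :
    ∀ U : ℤ → ℂ, (∀ j : ℤ, U (j + K) = U j) →
      ∀ k ∈ BK K,
        freeFlowK K (2 * Real.pi * (p : ℝ) / (q : ℝ)) (fun m => ((V m : ℝ) : ℂ) * U m) k =
          ((V k : ℝ) : ℂ) * freeFlowK K (2 * Real.pi * (p : ℝ) / (q : ℝ)) U k := by
  intro U _ k hk
  have hKeven : Even K := hK ▸ hκe.mul_right q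
  have hqK : (q : ℤ) ∣ K := ⟨κ, by rw [hK]; push_cast; ring⟩
  have hV : ∀ m ∈ BK K, (V m : ℂ) * freeKernel K (2 * π * p / q) (k - m) =
      V k * freeKernel K (2 * π * p / q) (k - m) := fun m hm =>
    mul_eq_mul_of_dft_eq_zero hKeven hVq hk hm fun n hn =>
      expK_mul_freeKernel hKeven (periodic_freePhase_of_dvd p q hqK)
        (periodic_freePhase_of_dvd p q hn) _
  simp only [freeFlowK_eq_sum_freeKernel, mul_sum, mul_left_comm (V k : ℂ)]
  refine sum_congr rfl fun m hm => ?_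
  linear_combination (1 / K * U m) * hV m hm

/-- For `K = κq` (`κ ≥ 2` even) and a real potential `V ∈ ℝ^{B^K}` whose
discrete Fourier coefficients `(F_K V)_j` vanish for `j` not divisible by `q`, the discrete
free flow at time `2πp/q` commutes with multiplication by `V`: for every `U ∈ ℂ^{B^K}` and
every `k ∈ B^K`,
`(e^{2πi(p/q)Δ^K}((V_mU_m)_m))_k = V_k·(e^{2πi(p/q)Δ^K}U)_k`. -/
theorem stmt16 (p : ℤ) (q : ℕ) (hq : 1 ≤ q) (κ : ℕ) (hκe : Even κ) (hκ2 : 2 ≤ κ)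
    (K : ℕ) (hK : K = κ * q)
    (V : ℤ → ℝ) (hV_per : ∀ j : ℤ, V (j + K) = V j)
    (hVq : ∀ j ∈ BK K, ¬ ((q : ℤ) ∣ j) → dft K (fun k => ((V k : ℝ) : ℂ)) j = 0) :
    ∀ U : ℤ → ℂ, (∀ j : ℤ, U (j + K) = U j) →
      ∀ k ∈ BK K,
        freeFlowK K (2 * Real.pi * (p : ℝ) / (q : ℝ)) (fun m => ((V m : ℝ) : ℂ) * U m) k =
          ((V k : ℝ) : ℂ) * freeFlowK K (2 * Real.pi * (p : ℝ) / (q : ℝ)) U k :=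
  stmt16_general p q κ hκe K hK V hVq
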